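/- For each n ∈ {0,...,N+1}, the truncated value function ξ ↦ V^c_n(ξ) is upper semicontinuous, where V^c_n(ξ) = max_u inf_w min{ min_{k=n..N} Φ^c_k(x_k,u_k), Θ^c(x_{N+1}) } over trajectories started at x_n = ξ, and V^c_{N+1} = Θ^c. -/
import Mathlib


/-- Trajectory of the system started at time `n` in state `ξ`. -/
def trajFrom {X U W : Type*} (F : ℕ → X → U → W → X) (n : ℕ) (ξ : X)
    (u : ℕ → U) (w : ℕ → W) : ℕ → X
  | 0 => ξ
  | k + 1 => if k + 1 ≤ n then ξ else F k (trajFrom F n ξ u w k) (u k) (w k)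

/-- The truncated value function
`V^c_n(ξ) = max_u inf_w min{ min_{k=n..N} Φ^c_k(x_k,u_k), Θ^c(x_{N+1}) }`
along trajectories started at `x_n = ξ`, with
`Φ^c_k(x,u) = min_i (g^k_i(x,u) - c_i)` and `Θ^c(x) = min_i (θ_i(x) - c_i)`. -/
noncomputable def Vn {X U W : Type*} {m : ℕ} [NeZero m] (N : ℕ)
    (F : ℕ → X → U → W → X) (Ω : ℕ → Set W)
    (g : ℕ → X → U → Fin m → ℝ) (θ : X → Fin m → ℝ) (c : Fin m → ℝ)
    (n : ℕ) (ξ : X) : ℝ :=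
  sSup {r | ∃ u : ℕ → U, r = ⨅ w : {w : ℕ → W // ∀ k, w k ∈ Ω k},
    min (⨅ k : (Finset.Icc n N : Finset ℕ),
          ⨅ i, (g k.1 (trajFrom F n ξ u w.1 k.1) (u k.1) i - c i))
        (⨅ i, (θ (trajFrom F n ξ u w.1 (N + 1)) i - c i))}

open Filter Topology Set

section Aux

variable {α : Type*} [TopologicalSpace α]

lemma aux_usc_comp {β : Type*} [TopologicalSpace β]
    {f : β → ℝ} {φ : α → β} (hf : UpperSemicontinuous f) (hφ : Continuous φ) :
    UpperSemicontinuous fun x => f (φ x) := fun x y hy =>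
  (hφ.tendsto x).eventually (hf (φ x) y hy)

lemma aux_usc_sub_const {f : α → ℝ} (hf : UpperSemicontinuous f) (d : ℝ) :
    UpperSemicontinuous fun x => f x - d := by
  intro x y hy
  dsimp only at hy
  have h : f x < y + d := by linarith
  filter_upwards [hf x _ h] with z hz
  linarith

lemma aux_usc_min {f g : α → ℝ} (hf : UpperSemicontinuous f)
    (hg : UpperSemicontinuous g) :
    UpperSemicontinuous fun x => min (f x) (g x) := by
  intro x y hy
  rcases min_lt_iff.1 hy with h | h
  · filter_upwards [hf x y h] with z hz; exact min_lt_iff.2 (Or.inl hz)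
  · filter_upwards [hg x y h] with z hz; exact min_lt_iff.2 (Or.inr hz)

lemma aux_usc_iInf_fin {ι : Type*} [Finite ι] [Nonempty ι] {f : ι → α → ℝ}
    (hf : ∀ i, UpperSemicontinuous (f i)) :
    UpperSemicontinuous fun x => ⨅ i, f i x := by
  intro x y hy
  obtain ⟨i, hi⟩ := exists_lt_of_ciInf_lt hy
  filter_upwards [hf i x y hi] with z hz
  exact lt_of_le_of_lt (ciInf_le ((Set.finite_range _).bddBelow) i) hz

lemma aux_usc_iInf {ι : Type*} [Nonempty ι] {f : ι → α → ℝ} {L : ℝ}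
    (hL : ∀ i x, L ≤ f i x) (hf : ∀ i, UpperSemicontinuous (f i)) :
    UpperSemicontinuous fun x => ⨅ i, f i x := by
  intro x y hy
  obtain ⟨i, hi⟩ := exists_lt_of_ciInf_lt hy
  filter_upwards [hf i x y hi] with z hz
  refine lt_of_le_of_lt (ciInf_le ⟨L, ?_⟩ i) hz
  rintro r ⟨j, rfl⟩; exact hL j z

lemma aux_usc_bddAbove {K : Type*} [TopologicalSpace K] [CompactSpace K]
    {f : K → ℝ} (hf : UpperSemicontinuous f) : ∃ M, ∀ k, f k ≤ M := by
  obtain ⟨t, ht⟩ := isCompact_univ.elim_finite_subcover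
    (fun M : ℕ => f ⁻¹' Set.Iio (M : ℝ))
    (fun M => (upperSemicontinuous_iff_isOpen_preimage.1 hf) (M : ℝ))
    (by
      intro k _
      obtain ⟨M, hM⟩ := exists_nat_gt (f k)
      exact Set.mem_iUnion.2 ⟨M, hM⟩)
  refine ⟨(t.sup id : ℕ), fun k => ?_⟩
  rcases Set.mem_iUnion₂.1 (ht (Set.mem_univ k)) with ⟨M, hMt, hMk⟩
  have : f k < (M : ℝ) := hMk
  have h2 : (M : ℝ) ≤ ((t.sup id : ℕ) : ℝ) := by
    exact_mod_cast Finset.le_sup (f := id) hMt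
  linarith

lemma aux_traj_cont {X U W : Type*} [TopologicalSpace X] [TopologicalSpace U]
    (F : ℕ → X → U → W → X) (Ω : ℕ → Set W)
    (hF : ∀ k, ∀ ω ∈ Ω k, Continuous fun p : X × U => F k p.1 p.2 ω)
    (n : ℕ) (w : ℕ → W) (hw : ∀ k, w k ∈ Ω k) (k : ℕ) :
    Continuous fun p : X × (ℕ → U) => trajFrom F n p.1 p.2 w k := by
  induction k with
  | zero => simpa [trajFrom] using continuous_fst
  | succ k ih =>
    by_cases h : k + 1 ≤ n
    · simp only [trajFrom, if_pos h]; exact continuous_fst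
    · simp only [trajFrom, if_neg h]
      exact (hF k (w k) (hw k)).comp
        (ih.prodMk ((continuous_apply k).comp continuous_snd))

end Aux

theorem stmt15 {X U W : Type*} [NormedAddCommGroup X] [NormedSpace ℝ X]
    [FiniteDimensional ℝ X] [MetricSpace U] [CompactSpace U] [Nonempty U]
    {m N : ℕ} [NeZero m] (F : ℕ → X → U → W → X) (Ω : ℕ → Set W)
    (hΩ : ∀ k, (Ω k).Nonempty)
    (g : ℕ → X → U → Fin m → ℝ) (θ : X → Fin m → ℝ)
    (hF : ∀ k, ∀ ω ∈ Ω k, Continuous fun p : X × U => F k p.1 p.2 ω)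
    (hg_usc : ∀ k i, UpperSemicontinuous fun p : X × U => g k p.1 p.2 i)
    (hg_bdd : ∀ k i, BddBelow (Set.range fun p : X × U => g k p.1 p.2 i))
    (hθ_usc : ∀ i, UpperSemicontinuous fun x => θ x i)
    (hθ_bdd : ∀ i, BddBelow (Set.range fun x => θ x i))
    (ξ : X)
    (c : Fin m → ℝ) :
    (∀ n ≤ N, UpperSemicontinuous (Vn N F Ω g θ c n)) ∧
    UpperSemicontinuous (fun x : X => ⨅ i, (θ x i - c i)) := by
  have hθusc' : UpperSemicontinuous (fun x : X => ⨅ i, (θ x i - c i)) :=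
    aux_usc_iInf_fin (fun i => aux_usc_sub_const (hθ_usc i) (c i))
  refine ⟨?_, hθusc'⟩
  intro n hn
  -- admissible noise sequences
  haveI hWne : Nonempty {w : ℕ → W // ∀ k, w k ∈ Ω k} :=
    ⟨⟨fun k => (hΩ k).choose, fun k => (hΩ k).choose_spec⟩⟩
  haveI hIcc : Nonempty ((Finset.Icc n N : Finset ℕ) : Type) :=
    ⟨⟨n, Finset.mem_Icc.2 ⟨le_refl n, hn⟩⟩⟩
  -- payoff for a fixed noise sequence
  set G : {w : ℕ → W // ∀ k, w k ∈ Ω k} → X × (ℕ → U) → ℝ := fun w p =>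
    min (⨅ k : (Finset.Icc n N : Finset ℕ),
          ⨅ i, (g k.1 (trajFrom F n p.1 p.2 w.1 k.1) (p.2 k.1) i - c i))
        (⨅ i, (θ (trajFrom F n p.1 p.2 w.1 (N + 1)) i - c i)) with hGdef
  set J : X × (ℕ → U) → ℝ := fun p => ⨅ w, G w p with hJdef
  have hV : ∀ ζ : X, Vn N F Ω g θ c n ζ = sSup {r | ∃ u : ℕ → U, r = J (ζ, u)} :=
    fun ζ => rfl
  -- lower bounds
  choose b hb using hg_bdd
  choose bθ hbθ using hθ_bdd
  set L : ℝ := min (⨅ k : (Finset.Icc n N : Finset ℕ), ⨅ i, (b k.1 i - c i))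
      (⨅ i, (bθ i - c i)) with hLdef
  have hL : ∀ w p, L ≤ G w p := by
    intro w p
    refine min_le_min ?_ ?_
    · refine le_ciInf fun k => le_ciInf fun i => ?_
      have h1 : (⨅ k : (Finset.Icc n N : Finset ℕ), ⨅ i, (b k.1 i - c i))
          ≤ ⨅ i, (b k.1 i - c i) := ciInf_le ((Set.finite_range _).bddBelow) k
      have h2 : (⨅ i, (b k.1 i - c i)) ≤ b k.1 i - c i :=
        ciInf_le ((Set.finite_range _).bddBelow) i
      have h3 : b k.1 i ≤ g k.1 (trajFrom F n p.1 p.2 w.1 k.1) (p.2 k.1) i :=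
        hb k.1 i (Set.mem_range_self (trajFrom F n p.1 p.2 w.1 k.1, p.2 k.1))
      linarith
    · refine le_ciInf fun i => ?_
      have h2 : (⨅ i, (bθ i - c i)) ≤ bθ i - c i :=
        ciInf_le ((Set.finite_range _).bddBelow) i
      have h3 : bθ i ≤ θ (trajFrom F n p.1 p.2 w.1 (N + 1)) i :=
        hbθ i (Set.mem_range_self _)
      linarith
  -- upper semicontinuity of G w
  have hGusc : ∀ w, UpperSemicontinuous (G w) := by
    intro w
    refine aux_usc_min (aux_usc_iInf_fin fun k => aux_usc_iInf_fin fun i => ?_)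
      (aux_usc_iInf_fin fun i => ?_)
    · exact aux_usc_sub_const
        (aux_usc_comp (hg_usc k.1 i)
          ((aux_traj_cont F Ω hF n w.1 w.2 k.1).prodMk
            ((continuous_apply (k.1 : ℕ)).comp continuous_snd))) (c i)
    · exact aux_usc_sub_const
        (aux_usc_comp (hθ_usc i) (aux_traj_cont F Ω hF n w.1 w.2 (N + 1))) (c i)
  have hJle : ∀ w p, J p ≤ G w p := by
    intro w p
    refine ciInf_le ⟨L, ?_⟩ w
    rintro r ⟨w', rfl⟩; exact hL w' p
  have hJusc : UpperSemicontinuous J :=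
    aux_usc_iInf (f := fun w p => G w p) (L := L) hL hGusc
  -- main argument
  intro ξ₀ y hy
  set z : ℝ := (Vn N F Ω g θ c n ξ₀ + y) / 2 with hzdef
  have hz1 : Vn N F Ω g θ c n ξ₀ < z := by simp only [hzdef]; linarith
  have hz2 : z < y := by simp only [hzdef]; linarith
  obtain ⟨w₀⟩ := hWne
  -- boundedness of the set at ξ₀
  have hGu : UpperSemicontinuous fun u : ℕ → U => G w₀ (ξ₀, u) :=
    aux_usc_comp (hGusc w₀) (continuous_const.prodMk continuous_id)
  obtain ⟨M, hM⟩ := aux_usc_bddAbove hGu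
  have hbdd : BddAbove {r | ∃ u : ℕ → U, r = J (ξ₀, u)} := by
    refine ⟨M, ?_⟩
    rintro r ⟨u, rfl⟩
    exact (hJle w₀ (ξ₀, u)).trans (hM u)
  have h1 : ∀ u : ℕ → U, J (ξ₀, u) < z := by
    intro u
    have := le_csSup hbdd (show J (ξ₀, u) ∈ {r | ∃ u : ℕ → U, r = J (ξ₀, u)} from ⟨u, rfl⟩)
    rw [← hV ξ₀] at this
    exact lt_of_le_of_lt this hz1
  -- rectangles where J < z
  have key : ∀ u : ℕ → U, ∃ s ∈ 𝓝 ξ₀, ∃ t ∈ 𝓝 u,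
      ∀ ξ' ∈ s, ∀ u' ∈ t, J (ξ', u') < z := by
    intro u
    have hev : {p : X × (ℕ → U) | J p < z} ∈ 𝓝 (ξ₀, u) := hJusc (ξ₀, u) z (h1 u)
    rcases mem_nhds_prod_iff.1 hev with ⟨s, hs, t, ht, hst⟩
    exact ⟨s, hs, t, ht, fun ξ' hξ' u' hu' => hst (Set.mk_mem_prod hξ' hu')⟩
  choose s hs t ht hst using key
  obtain ⟨Tf, hTf⟩ := isCompact_univ.elim_nhds_subcover t (fun u _ => ht u)
  have hA : (⋂ u ∈ Tf, s u) ∈ 𝓝 ξ₀ :=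
    (Filter.biInter_mem Tf.finite_toSet).2 fun u _ => hs u
  filter_upwards [hA] with ζ hζ
  have hall : ∀ u' : ℕ → U, J (ζ, u') < z := by
    intro u'
    rcases Set.mem_iUnion₂.1 (hTf.2 (Set.mem_univ u')) with ⟨u, hu, hu'⟩
    exact hst u ζ (Set.mem_iInter₂.1 hζ u hu) u' hu'
  have hne : {r | ∃ u : ℕ → U, r = J (ζ, u)}.Nonempty :=
    ⟨J (ζ, Classical.arbitrary _), ⟨_, rfl⟩⟩
  calc Vn N F Ω g θ c n ζ = sSup {r | ∃ u : ℕ → U, r = J (ζ, u)} := hV ζ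
    _ ≤ z := csSup_le hne (by rintro r ⟨u, rfl⟩; exact (hall u).le)
    _ < y := hz2
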